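/- Let $X$ be an INAR(1) process with parameter $1 - h/n^2$, $h \ge 0$, $X_0 = 0$, innovations with mean $\mu_G$ and finite variance. Then $\hat{\mu}_{G,n} = X_n / n$ converges in probability to $\mu_G$ under $\mathbb{P}_{1-h/n^2}$ as $n \to \infty$. -/

import Mathlib

open MeasureTheory ProbabilityTheory Filter Finset

/-- An INAR(1) process with autoregression parameter `θ` and innovation
distribution `G` on `ℕ`, defined on the probability space `(Ω, P)`:
`X 0 = 0` and `X (t+1) = θ ∘ X t + ε (t+1)`, where the binomial thinning
`θ ∘ X t` is the sum of `X t` i.i.d. Bernoulli(θ) variables `Z (t+1) j`,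
all thinning variables and innovations being jointly independent. -/
structure INAR {Ω : Type} [MeasurableSpace Ω] (P : Measure Ω)
    (θ : ℝ) (G : PMF ℕ) where
  Z : ℕ → ℕ → Ω → ℕ
  ε : ℕ → Ω → ℕ
  X : ℕ → Ω → ℕ
  hZmeas : ∀ t j, Measurable (Z t j)
  hεmeas : ∀ t, Measurable (ε t)
  hZle : ∀ t j ω, Z t j ω ≤ 1
  hZdist : ∀ t j, P {ω | Z t j ω = 1} = ENNReal.ofReal θ
  hεdist : ∀ t k, P {ω | ε t ω = k} = G k
  hIndep : iIndepFun
      (Sum.elim (fun p : ℕ × ℕ => Z p.1 p.2) ε) P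
  hX0 : ∀ ω, X 0 ω = 0
  hXrec : ∀ t ω, X (t + 1) ω =
      (∑ j ∈ Finset.range (X t ω), Z (t + 1) j ω) + ε (t + 1) ω

open scoped ENNReal

/-!
With `L t = X t - θ ∘ X t` (`INAR.thinningLoss`), the recursion telescopes to
`X n + ∑_{t<n} L t = ∑_{t<n} ε (t + 1)`. The innovation sum is a sum of `n` pairwise independent
copies of `G`, so Chebyshev gives `P(|∑ ε - n μ| ≥ n δ) ≤ σ² / (n δ²)`. The thinning variables of
step `t + 1` are independent of `X t`, so Wald's identity gives
`E (L t) = (1 - θ) E (X t) ≤ (h / n²) · n μ`; hence `E (∑_{t<n} L t) ≤ h μ`, and Markov gives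
`P(∑ L ≥ n δ) ≤ h μ / (n δ)`. Both bounds are `O(1/n)`.
-/

namespace PMF

variable {p : PMF ℕ} {f : ℕ → ℝ} {a : ℝ}

lemma integrable_of_hasSum (hf : HasSum (fun k => f k * (p k).toReal) a) (hf0 : 0 ≤ f) :
    Integrable f p.toMeasure := by
  rw [← p.toMeasure.sum_smul_dirac]
  refine integrable_sum_dirac (fun k => measure_ne_top _ _) (hf.summable.congr fun k => ?_)
  rw [p.toMeasure_apply_singleton k (measurableSet_singleton k), Real.norm_of_nonneg (hf0 k),
    mul_comm]

lemma integral_eq_of_hasSum (hf : HasSum (fun k => f k * (p k).toReal) a) (hf0 : 0 ≤ f) :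
    ∫ k, f k ∂p.toMeasure = a := by
  rw [p.integral_eq_tsum f (integrable_of_hasSum hf hf0), ← hf.tsum_eq]
  simp_rw [smul_eq_mul, mul_comm]

variable {μ σ2 : ℝ}

lemma integral_natCast (hμ : HasSum (fun k : ℕ => (k : ℝ) * (p k).toReal) μ) :
    ∫ k, (k : ℝ) ∂p.toMeasure = μ :=
  integral_eq_of_hasSum (f := fun k : ℕ => (k : ℝ)) hμ fun k => k.cast_nonneg

lemma memLp_natCast (hσ : HasSum (fun k : ℕ => ((k : ℝ) - μ) ^ 2 * (p k).toReal) σ2) :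
    MemLp (fun k : ℕ => (k : ℝ)) 2 p.toMeasure := by
  have hcentered : MemLp (fun k : ℕ => (k : ℝ) - μ) 2 p.toMeasure :=
    (memLp_two_iff_integrable_sq measurable_from_top.aestronglyMeasurable).2
      (integrable_of_hasSum hσ fun k => sq_nonneg _)
  convert hcentered.add (memLp_const μ) using 1
  ext k
  simp

lemma variance_natCast (hμ : HasSum (fun k : ℕ => (k : ℝ) * (p k).toReal) μ)
    (hσ : HasSum (fun k : ℕ => ((k : ℝ) - μ) ^ 2 * (p k).toReal) σ2) :
    variance (fun k : ℕ => (k : ℝ)) p.toMeasure = σ2 := by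
  rw [variance_eq_integral measurable_from_top.aemeasurable, integral_natCast hμ]
  exact integral_eq_of_hasSum hσ fun k => sq_nonneg _

end PMF

lemma ENNReal.one_sub_ofReal_one_sub_le (x : ℝ) :
    1 - ENNReal.ofReal (1 - x) ≤ ENNReal.ofReal x := by
  rw [tsub_le_iff_left]
  calc 1 = ENNReal.ofReal ((1 - x) + x) := by simp
    _ ≤ ENNReal.ofReal (1 - x) + ENNReal.ofReal x := ENNReal.ofReal_add_le

theorem Measurable.apply_index {Ω β : Type*} {_ : MeasurableSpace Ω} [MeasurableSpace β]
    {u : Ω → ℕ} (hu : Measurable u) {g : ℕ → Ω → β} (hg : ∀ k, Measurable (g k)) :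
    Measurable fun ω => g (u ω) ω :=
  (measurable_from_prod_countable_left (f := fun q : Ω × ℕ => g q.2 q.1) hg).comp
    (measurable_id.prodMk hu)

section

variable {Ω : Type*} [MeasurableSpace Ω] {P : Measure Ω}

theorem lintegral_sum_range_eq_tsum {N : Ω → ℕ} {Y : ℕ → Ω → ℝ≥0∞} (hN : Measurable N)
    (hY : ∀ j, Measurable (Y j)) (hind : ∀ j, IndepFun N (Y j) P) :
    ∫⁻ ω, ∑ j ∈ range (N ω), Y j ω ∂P = ∑' j, P {ω | j < N ω} * ∫⁻ ω, Y j ω ∂P := by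
  set I : ℕ → Ω → ℝ≥0∞ := fun j => {ω | j < N ω}.indicator 1
  have hset : ∀ j, MeasurableSet {ω | j < N ω} := fun j => hN measurableSet_Ioi
  have hI : ∀ j, Measurable (I j) := fun j => measurable_one.indicator (hset j)
  have hindI : ∀ j, IndepFun (I j) (Y j) P := fun j => by
    have hIN : I j = (fun n => if j < n then 1 else 0) ∘ N := by
      ext ω
      simp [I, Set.indicator_apply]
    rw [hIN]
    exact (hind j).comp measurable_from_top measurable_id
  have hsum : ∀ ω, ∑ j ∈ range (N ω), Y j ω = ∑' j, I j ω * Y j ω := fun ω => by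
    rw [tsum_eq_sum (s := range (N ω)) fun j hj => by simp_all [I]]
    exact sum_congr rfl fun j hj => by simp_all [I]
  simp_rw [hsum]
  rw [lintegral_tsum (f := fun j ω => I j ω * Y j ω) fun j => ((hI j).mul (hY j)).aemeasurable]
  refine tsum_congr fun j => ?_
  rw [← lintegral_indicator_one (hset j)]
  exact lintegral_mul_eq_lintegral_mul_lintegral_of_indepFun (hI j) (hY j) (hindI j)

theorem lintegral_natCast_eq_tsum [IsProbabilityMeasure P] {N : Ω → ℕ} (hN : Measurable N) :
    ∫⁻ ω, (N ω : ℝ≥0∞) ∂P = ∑' j, P {ω | j < N ω} := by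
  simpa using lintegral_sum_range_eq_tsum (P := P) hN (fun _ => measurable_const)
    fun _ => indepFun_const_right N (1 : ℝ≥0∞)

theorem lintegral_sum_range_eq_mul_lintegral [IsProbabilityMeasure P] {N : Ω → ℕ}
    {Y : ℕ → Ω → ℝ≥0∞} {c : ℝ≥0∞}
    (hN : Measurable N) (hY : ∀ j, Measurable (Y j)) (hind : ∀ j, IndepFun N (Y j) P)
    (hc : ∀ j, ∫⁻ ω, Y j ω ∂P = c) :
    ∫⁻ ω, ∑ j ∈ range (N ω), Y j ω ∂P = c * ∫⁻ ω, (N ω : ℝ≥0∞) ∂P := by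
  simp_rw [lintegral_sum_range_eq_tsum hN hY hind, hc, lintegral_natCast_eq_tsum hN,
    ENNReal.tsum_mul_right, mul_comm]

theorem meas_ge_abs_sum_sub_le_of_pairwise_indepFun [IsFiniteMeasure P] {ι : Type*}
    {Y : ι → Ω → ℝ} {μ σ2 : ℝ}
    (hY : ∀ i, MemLp (Y i) 2 P) (hind : Pairwise fun i j => IndepFun (Y i) (Y j) P)
    (hmean : ∀ i, P[Y i] = μ) (hvar : ∀ i, variance (Y i) P = σ2) (s : Finset ι) {c : ℝ}
    (hc : 0 < c) :
    P {ω | c ≤ |∑ i ∈ s, Y i ω - #s * μ|} ≤ ENNReal.ofReal (#s * σ2 / c ^ 2) := by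
  have hmeanS : ∫ ω, ∑ i ∈ s, Y i ω ∂P = #s * μ := by
    rw [integral_finsetSum s fun i _ => (hY i).integrable one_le_two]
    simp [hmean]
  have hvarS : variance (∑ i ∈ s, Y i) P = #s * σ2 := by
    rw [IndepFun.variance_sum (fun i _ => hY i) fun i _ j _ hij => hind hij]
    simp [hvar]
  have := meas_ge_le_variance_div_sq (memLp_finsetSum' s fun i _ => hY i) hc
  simpa [hmeanS, hvarS] using this

end

namespace INAR

variable {Ω : Type} [MeasurableSpace Ω] {P : Measure Ω} {θ : ℝ} {G : PMF ℕ} (M : INAR P θ G)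

def noise : (ℕ × ℕ) ⊕ ℕ → Ω → ℕ := Sum.elim (fun p : ℕ × ℕ => M.Z p.1 p.2) M.ε

def noiseTime : (ℕ × ℕ) ⊕ ℕ → ℕ := Sum.elim Prod.fst id

lemma measurable_noise (i : (ℕ × ℕ) ⊕ ℕ) : Measurable (M.noise i) := by
  cases i with
  | inl p => exact M.hZmeas p.1 p.2
  | inr t => exact M.hεmeas t

def past (t : ℕ) : MeasurableSpace Ω :=
  ⨆ i ∈ {i | noiseTime i ≤ t}, MeasurableSpace.comap (M.noise i) inferInstance

lemma past_le (t : ℕ) : M.past t ≤ ‹MeasurableSpace Ω› :=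
  iSup₂_le fun i _ => (M.measurable_noise i).comap_le

lemma past_mono {s t : ℕ} (hst : s ≤ t) : M.past s ≤ M.past t :=
  biSup_mono fun _ hi => le_trans hi hst

lemma measurable_noise_past {t : ℕ} {i : (ℕ × ℕ) ⊕ ℕ} (hi : noiseTime i ≤ t) :
    Measurable[M.past t] (M.noise i) :=
  measurable_iff_comap_le.2 <| le_iSup₂ (f := fun i (_ : i ∈ {i | noiseTime i ≤ t}) =>
    MeasurableSpace.comap (M.noise i) inferInstance) i hi

lemma measurable_X_past (t : ℕ) : Measurable[M.past t] (M.X t) := by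
  induction t with
  | zero => simp [funext M.hX0]
  | succ t ih =>
    rw [funext (M.hXrec t)]
    refine Measurable.add ?_ (M.measurable_noise_past (i := .inr (t + 1)) le_rfl)
    exact (ih.mono (M.past_mono t.le_succ) le_rfl).apply_index
      (g := fun N ω => ∑ j ∈ range N, M.Z (t + 1) j ω) fun N =>
        Finset.measurable_sum _ fun j _ => M.measurable_noise_past (i := .inl (t + 1, j)) le_rfl

lemma measurable_X (t : ℕ) : Measurable (M.X t) :=
  (M.measurable_X_past t).mono (M.past_le t) le_rfl

lemma indepFun_X_Z (t j : ℕ) : IndepFun (M.X t) (M.Z (t + 1) j) P := by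
  have hdisj : Disjoint {i | noiseTime i ≤ t} ({.inl (t + 1, j)} : Set ((ℕ × ℕ) ⊕ ℕ)) := by
    simp [noiseTime]
  have hindep := indep_iSup_of_disjoint (fun i => (M.measurable_noise i).comap_le)
    M.hIndep.iIndep hdisj
  rw [IndepFun_iff_Indep]
  refine indep_of_indep_of_le_left (indep_of_indep_of_le_right hindep ?_)
    (M.measurable_X_past t).comap_le
  exact le_iSup₂ (f := fun i (_ : i ∈ ({.inl (t + 1, j)} : Set ((ℕ × ℕ) ⊕ ℕ))) =>
    MeasurableSpace.comap (M.noise i) inferInstance) _ rfl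

lemma indepFun_ε_real {s t : ℕ} (hst : s ≠ t) :
    IndepFun (fun ω => (M.ε s ω : ℝ)) (fun ω => (M.ε t ω : ℝ)) P :=
  (M.hIndep.indepFun (i := .inr s) (j := .inr t) (by simpa using hst)).comp
    measurable_from_top measurable_from_top

def thinningLoss (t : ℕ) (ω : Ω) : ℕ := ∑ j ∈ range (M.X t ω), (1 - M.Z (t + 1) j ω)

lemma X_succ_add_thinningLoss (t : ℕ) (ω : Ω) :
    M.X (t + 1) ω + M.thinningLoss t ω = M.X t ω + M.ε (t + 1) ω := by
  have hsplit : ∑ j ∈ range (M.X t ω), M.Z (t + 1) j ω + M.thinningLoss t ω = M.X t ω := by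
    rw [thinningLoss, ← sum_add_distrib,
      sum_congr rfl fun j _ => Nat.add_sub_cancel' (M.hZle (t + 1) j ω)]
    simp
  rw [M.hXrec]
  omega

lemma X_add_sum_thinningLoss (n : ℕ) (ω : Ω) :
    M.X n ω + ∑ t ∈ range n, M.thinningLoss t ω = ∑ t ∈ range n, M.ε (t + 1) ω := by
  induction n with
  | zero => simp [M.hX0]
  | succ n ih =>
    rw [sum_range_succ, sum_range_succ, ← ih]
    linarith [M.X_succ_add_thinningLoss n ω]

lemma measurable_thinningLoss (t : ℕ) : Measurable (M.thinningLoss t) :=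
  (M.measurable_X t).apply_index fun _ =>
    Finset.measurable_sum _ fun j _ => (M.hZmeas (t + 1) j).const_sub 1

lemma identDistrib_ε (t : ℕ) : IdentDistrib (M.ε t) id P G.toMeasure where
  aemeasurable_fst := (M.hεmeas t).aemeasurable
  aemeasurable_snd := aemeasurable_id
  map_eq := by
    rw [Measure.map_id]
    refine Measure.ext_iff_singleton.2 fun k => ?_
    rw [Measure.map_apply (M.hεmeas t) (measurableSet_singleton k),
      G.toMeasure_apply_singleton k (measurableSet_singleton k)]
    exact M.hεdist t k

lemma identDistrib_ε_real (t : ℕ) :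
    IdentDistrib (fun ω => (M.ε t ω : ℝ)) (fun k : ℕ => (k : ℝ)) P G.toMeasure :=
  (M.identDistrib_ε t).comp measurable_from_top

variable {μG σ2 : ℝ}

lemma lintegral_ε (hμ : HasSum (fun k : ℕ => (k : ℝ) * (G k).toReal) μG) (t : ℕ) :
    ∫⁻ ω, (M.ε t ω : ℝ≥0∞) ∂P = ENNReal.ofReal μG := by
  have hint : Integrable (fun ω => (M.ε t ω : ℝ)) P :=
    (M.identDistrib_ε_real t).integrable_iff.2
      (PMF.integrable_of_hasSum (f := fun k : ℕ => (k : ℝ)) hμ fun k => k.cast_nonneg)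
  rw [← (M.identDistrib_ε_real t).integral_eq.trans (PMF.integral_natCast hμ),
    ofReal_integral_eq_lintegral_ofReal hint (Eventually.of_forall fun ω => by simp)]
  simp

lemma lintegral_X_le (hμ : HasSum (fun k : ℕ => (k : ℝ) * (G k).toReal) μG) (t : ℕ) :
    ∫⁻ ω, (M.X t ω : ℝ≥0∞) ∂P ≤ t * ENNReal.ofReal μG :=
  calc ∫⁻ ω, (M.X t ω : ℝ≥0∞) ∂P
      ≤ ∫⁻ ω, ∑ s ∈ range t, (M.ε (s + 1) ω : ℝ≥0∞) ∂P := lintegral_mono fun ω => by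
        rw [← Nat.cast_sum]
        exact Nat.cast_le.2 (Nat.le.intro (M.X_add_sum_thinningLoss t ω))
    _ = t * ENNReal.ofReal μG := by
      rw [lintegral_finsetSum (f := fun s ω => (M.ε (s + 1) ω : ℝ≥0∞)) _ fun s _ =>
        measurable_from_top.comp (M.hεmeas (s + 1))]
      simp [M.lintegral_ε hμ]

lemma meas_ge_abs_X_div_sub_le {n : ℕ} (hn : n ≠ 0) (δ : ℝ) :
    P {ω | δ ≤ |(M.X n ω : ℝ) / n - μG|}
      ≤ P {ω | n * (δ / 2) ≤ |∑ t ∈ range n, (M.ε (t + 1) ω : ℝ) - n * μG|}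
        + P {ω | n * (δ / 2) ≤ ((∑ t ∈ range n, M.thinningLoss t ω : ℕ) : ℝ)} := by
  refine (measure_mono fun ω hω => ?_).trans (measure_union_le _ _)
  have hn0 : (0 : ℝ) < n := by positivity
  set S := ∑ t ∈ range n, (M.ε (t + 1) ω : ℝ)
  set L := ∑ t ∈ range n, (M.thinningLoss t ω : ℝ)
  have hX : (M.X n ω : ℝ) - n * μG = (S - n * μG) - L := by
    have hid := congrArg (Nat.cast : ℕ → ℝ) (M.X_add_sum_thinningLoss n ω)
    push_cast at hid
    linarith
  have hdev : n * δ ≤ |S - n * μG| + L := by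
    rw [Set.mem_ofPred_eq, div_sub' hn0.ne', abs_div, abs_of_pos hn0, le_div_iff₀ hn0,
      mul_comm, hX] at hω
    have hL : |L| = L := abs_of_nonneg (sum_nonneg fun _ _ => Nat.cast_nonneg _)
    linarith [abs_sub (S - n * μG) L]
  by_contra hc
  simp only [Set.mem_union, Set.mem_ofPred_eq, not_or, not_le] at hc
  push_cast at hc
  linarith

variable [IsProbabilityMeasure P]

lemma lintegral_one_sub_Z (t j : ℕ) :
    ∫⁻ ω, ((1 - M.Z t j ω : ℕ) : ℝ≥0∞) ∂P = 1 - ENNReal.ofReal θ := by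
  have hZ1 : MeasurableSet {ω | M.Z t j ω = 1} := M.hZmeas t j (measurableSet_singleton 1)
  have hind : (fun ω => ((1 - M.Z t j ω : ℕ) : ℝ≥0∞)) = {ω | M.Z t j ω = 1}ᶜ.indicator 1 := by
    ext ω
    rcases Nat.le_one_iff_eq_zero_or_eq_one.1 (M.hZle t j ω) with h | h <;> simp [h]
  rw [hind, lintegral_indicator_one hZ1.compl, prob_compl_eq_one_sub hZ1, M.hZdist]

lemma lintegral_thinningLoss (t : ℕ) :
    ∫⁻ ω, (M.thinningLoss t ω : ℝ≥0∞) ∂P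
      = (1 - ENNReal.ofReal θ) * ∫⁻ ω, (M.X t ω : ℝ≥0∞) ∂P := by
  have hsurv : Measurable fun z : ℕ => ((1 - z : ℕ) : ℝ≥0∞) := measurable_from_top
  simp_rw [thinningLoss, Nat.cast_sum]
  exact lintegral_sum_range_eq_mul_lintegral (M.measurable_X t)
    (fun j => hsurv.comp (M.hZmeas _ j)) (fun j => (M.indepFun_X_Z t j).comp measurable_id hsurv)
    fun j => M.lintegral_one_sub_Z _ j

lemma lintegral_sum_thinningLoss_le (hμ : HasSum (fun k : ℕ => (k : ℝ) * (G k).toReal) μG)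
    (n : ℕ) :
    ∫⁻ ω, ∑ t ∈ range n, (M.thinningLoss t ω : ℝ≥0∞) ∂P
      ≤ (1 - ENNReal.ofReal θ) * (n ^ 2 * ENNReal.ofReal μG) :=
  calc ∫⁻ ω, ∑ t ∈ range n, (M.thinningLoss t ω : ℝ≥0∞) ∂P
      = ∑ t ∈ range n, (1 - ENNReal.ofReal θ) * ∫⁻ ω, (M.X t ω : ℝ≥0∞) ∂P := by
        rw [lintegral_finsetSum (f := fun t ω => (M.thinningLoss t ω : ℝ≥0∞)) _ fun t _ =>
          measurable_from_top.comp (M.measurable_thinningLoss t)]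
        simp_rw [M.lintegral_thinningLoss]
    _ ≤ ∑ _t ∈ range n, (1 - ENNReal.ofReal θ) * (n * ENNReal.ofReal μG) := by
        gcongr with t ht
        exact (M.lintegral_X_le hμ t).trans (by gcongr; exact (mem_range.1 ht).le)
    _ = (1 - ENNReal.ofReal θ) * (n ^ 2 * ENNReal.ofReal μG) := by
        rw [sum_const, card_range, nsmul_eq_mul]
        ring

lemma meas_ge_abs_sum_ε_sub_le (hμ : HasSum (fun k : ℕ => (k : ℝ) * (G k).toReal) μG)
    (hσ : HasSum (fun k : ℕ => ((k : ℝ) - μG) ^ 2 * (G k).toReal) σ2) (n : ℕ) {c : ℝ}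
    (hc : 0 < c) :
    P {ω | c ≤ |∑ t ∈ range n, (M.ε (t + 1) ω : ℝ) - n * μG|}
      ≤ ENNReal.ofReal (n * σ2 / c ^ 2) := by
  simpa using meas_ge_abs_sum_sub_le_of_pairwise_indepFun
    (Y := fun t ω => (M.ε (t + 1) ω : ℝ))
    (fun t => (M.identDistrib_ε_real _).memLp_iff.2 (PMF.memLp_natCast hσ))
    (fun s t hst => M.indepFun_ε_real (by simpa using hst))
    (fun t => (M.identDistrib_ε_real _).integral_eq.trans (PMF.integral_natCast hμ))
    (fun t => (M.identDistrib_ε_real _).variance_eq.trans (PMF.variance_natCast hμ hσ))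
    (range n) hc

lemma meas_ge_sum_thinningLoss_le (hμ : HasSum (fun k : ℕ => (k : ℝ) * (G k).toReal) μG)
    (n : ℕ) {c : ℝ} (hc : 0 < c) :
    P {ω | c ≤ ((∑ t ∈ range n, M.thinningLoss t ω : ℕ) : ℝ)}
      ≤ (1 - ENNReal.ofReal θ) * (n ^ 2 * ENNReal.ofReal μG) / ENNReal.ofReal c := by
  have hset : {ω | c ≤ ((∑ t ∈ range n, M.thinningLoss t ω : ℕ) : ℝ)}
      = {ω | ENNReal.ofReal c ≤ ∑ t ∈ range n, (M.thinningLoss t ω : ℝ≥0∞)} := by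
    ext ω
    rw [Set.mem_ofPred_eq, Set.mem_ofPred_eq, ← Nat.cast_sum, ← ENNReal.ofReal_natCast,
      ENNReal.ofReal_le_ofReal_iff (Nat.cast_nonneg _)]
  rw [hset]
  refine (meas_ge_le_lintegral_div ?_ (by simpa using hc) ENNReal.ofReal_ne_top).trans ?_
  · exact (Finset.measurable_sum _ fun t _ =>
      measurable_from_top.comp (M.measurable_thinningLoss t)).aemeasurable
  · gcongr
    exact M.lintegral_sum_thinningLoss_le hμ n

end INAR

section Triangular

variable {Ω : ℕ → Type} [∀ n, MeasurableSpace (Ω n)] {P : ∀ n, Measure (Ω n)}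
  [∀ n, IsProbabilityMeasure (P n)] {G : PMF ℕ} {μG : ℝ}

theorem tendsto_meas_ge_abs_sum_ε_sub {θ : ℕ → ℝ} (M : ∀ n, INAR (P n) (θ n) G) {σ2 : ℝ}
    (hμ : HasSum (fun k : ℕ => (k : ℝ) * (G k).toReal) μG)
    (hσ : HasSum (fun k : ℕ => ((k : ℝ) - μG) ^ 2 * (G k).toReal) σ2) {δ : ℝ} (hδ : 0 < δ) :
    Tendsto (fun n : ℕ =>
      P n {ω | n * δ ≤ |∑ t ∈ range n, ((M n).ε (t + 1) ω : ℝ) - n * μG|}) atTop (nhds 0) := by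
  have hlim : Tendsto (fun n : ℕ => ENNReal.ofReal (σ2 / δ ^ 2 / n)) atTop (nhds 0) := by
    simpa using ENNReal.tendsto_ofReal (tendsto_const_div_atTop_nhds_zero_nat (σ2 / δ ^ 2))
  refine tendsto_of_tendsto_of_tendsto_of_le_of_le' tendsto_const_nhds hlim
    (.of_forall fun _ => zero_le) ?_
  filter_upwards [eventually_ne_atTop 0] with n hn
  refine ((M n).meas_ge_abs_sum_ε_sub_le hμ hσ n (by positivity)).trans_eq ?_
  congr 1
  field_simp

theorem tendsto_meas_ge_sum_thinningLoss {h : ℝ}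
    (M : ∀ n, INAR (P n) (1 - h / (n : ℝ) ^ 2) G)
    (hμ : HasSum (fun k : ℕ => (k : ℝ) * (G k).toReal) μG) {δ : ℝ} (hδ : 0 < δ) :
    Tendsto (fun n : ℕ =>
      P n {ω | n * δ ≤ ((∑ t ∈ range n, (M n).thinningLoss t ω : ℕ) : ℝ)}) atTop (nhds 0) := by
  have hlim : Tendsto (fun n : ℕ => ENNReal.ofReal h * ENNReal.ofReal μG / ENNReal.ofReal (n * δ))
      atTop (nhds 0) := by
    simpa using ENNReal.Tendsto.const_div (ENNReal.tendsto_ofReal_atTop.comp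
      (tendsto_natCast_atTop_atTop.atTop_mul_const hδ)) (Or.inr (by finiteness))
  refine tendsto_of_tendsto_of_tendsto_of_le_of_le' tendsto_const_nhds hlim
    (.of_forall fun _ => zero_le) ?_
  filter_upwards [eventually_ne_atTop 0] with n hn
  refine ((M n).meas_ge_sum_thinningLoss_le hμ n (by positivity)).trans ?_
  gcongr ?_ / _
  calc (1 - ENNReal.ofReal (1 - h / (n : ℝ) ^ 2)) * ((n : ℝ≥0∞) ^ 2 * ENNReal.ofReal μG)
      ≤ ENNReal.ofReal h / (n : ℝ≥0∞) ^ 2 * ((n : ℝ≥0∞) ^ 2 * ENNReal.ofReal μG) := by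
        gcongr
        refine (ENNReal.one_sub_ofReal_one_sub_le _).trans_eq ?_
        rw [ENNReal.ofReal_div_of_pos (by positivity), ENNReal.ofReal_pow (Nat.cast_nonneg n),
          ENNReal.ofReal_natCast]
    _ = ENNReal.ofReal h * ENNReal.ofReal μG := by
        rw [← mul_assoc, ENNReal.div_mul_cancel (by simpa using hn) (by simp)]

end Triangular

theorem inar_estimate_mean_general
    {Ω : ℕ → Type} [∀ n, MeasurableSpace (Ω n)] (P : ∀ n, Measure (Ω n))
    [∀ n, IsProbabilityMeasure (P n)] (h : ℝ) (G : PMF ℕ)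
    (M : ∀ n, INAR (P n) (1 - h / (n : ℝ) ^ 2) G) (μG σ2 : ℝ)
    (hμ : HasSum (fun k : ℕ => (k : ℝ) * (G k).toReal) μG)
    (hσ : HasSum (fun k : ℕ => ((k : ℝ) - μG) ^ 2 * (G k).toReal) σ2) :
    ∀ δ : ℝ, 0 < δ →
      Filter.Tendsto
        (fun n : ℕ =>
          ((P n) {ω | δ ≤ |((M n).X n ω : ℝ) / n - μG|}).toReal)
        Filter.atTop (nhds 0) := by
  intro δ hδ
  have hsplit := (tendsto_meas_ge_abs_sum_ε_sub M hμ hσ (half_pos hδ)).add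
    (tendsto_meas_ge_sum_thinningLoss M hμ (half_pos hδ))
  rw [add_zero] at hsplit
  have hlim := tendsto_of_tendsto_of_tendsto_of_le_of_le' tendsto_const_nhds hsplit
    (.of_forall fun _ => zero_le)
    ((eventually_ne_atTop 0).mono fun n hn => (M n).meas_ge_abs_X_div_sub_le hn δ)
  have hlim_real := (ENNReal.tendsto_toReal ENNReal.zero_ne_top).comp hlim
  rwa [ENNReal.toReal_zero] at hlim_real

/-- Consistent estimation of the innovation mean in the nearly unstable
INAR(1) model: `μ̂_{G,n} = X_n / n → μG` in probability under `P_{1-h/n²}`. -/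
theorem inar_estimate_mean
    {Ω : ℕ → Type} [∀ n, MeasurableSpace (Ω n)] (P : ∀ n, Measure (Ω n))
    [∀ n, IsProbabilityMeasure (P n)] (h : ℝ) (hh : 0 ≤ h) (G : PMF ℕ)
    (M : ∀ n, INAR (P n) (1 - h / (n : ℝ) ^ 2) G) (μG σ2 : ℝ)
    (hμ : HasSum (fun k : ℕ => (k : ℝ) * (G k).toReal) μG)
    (hσ : HasSum (fun k : ℕ => ((k : ℝ) - μG) ^ 2 * (G k).toReal) σ2) :
    ∀ δ : ℝ, 0 < δ →
      Filter.Tendsto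
        (fun n : ℕ =>
          ((P n) {ω | δ ≤ |((M n).X n ω : ℝ) / n - μG|}).toReal)
        Filter.atTop (nhds 0) :=
  inar_estimate_mean_general P h G M μG σ2 hμ hσ
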